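/- Let n ≥ 3 and let X be a set of exactly n+2 vertices of the n-cube graph Q_n. Let k := ⌊(n+2)/2⌋ and let s_1, t_1, …, s_k, t_k be 2k distinct vertices of X, arbitrarily labelled and paired. Then for at least k−1 of the indices i ∈ {1,…,k} there exists a path in Q_n from s_i to t_i none of whose inner vertices belongs to X. (This is the paper's Lemma about a facet F, a (d−1)-cube with n = d−1 ≥ 3, of a cubical d-polytope containing a set X of d+1 terminals.) -/

import Mathlib

/-!
Split `Q_{k+1}` along a coordinate into two facets `Q_k`. If each facet contains fewer than `k`
deleted vertices, both stay connected by induction and some edge between them survives;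
otherwise one facet contains at most one deleted vertex, and every remaining vertex with a
remaining neighbour can be routed into it. Hence deleting fewer than `n` vertices leaves `Q_n`
connected, and for `n ≥ 3` deleting `n` vertices only cuts off vertices whose whole
neighbourhood was deleted.

So if a pair `s, t` fails, one of its endpoints `w` has `N(w) = X \ {s, t}`. Two failing pairs
would give two such vertices that are adjacent and whose neighbourhoods, of size `n` each, lie in
`X` of size `n + 2`; they would share a neighbour, a triangle in the bipartite graph `Q_n`.
-/

/-- The `n`-cube graph: vertices are functions `Fin n → Bool`, two vertices
adjacent iff they differ in exactly one coordinate. -/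
def cubeGraph (n : ℕ) : SimpleGraph (Fin n → Bool) where
  Adj x y := ∃ i, x i ≠ y i ∧ ∀ j, j ≠ i → x j = y j
  symm := by
    constructor
    rintro x y ⟨i, hi, hj⟩
    exact ⟨i, fun h => hi h.symm, fun j hji => (hj j hji).symm⟩
  loopless := by
    constructor
    rintro x ⟨i, hi, -⟩
    exact hi rfl

namespace SimpleGraph

variable {V W : Type*} {G : SimpleGraph V} {H : SimpleGraph W} {Y Z : Set V} {a b c : V}

def ReachableAvoiding (G : SimpleGraph V) (Y : Set V) (a b : V) : Prop :=
  ∃ p : G.Walk a b, ∀ v ∈ p.support, v ∉ Y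

namespace ReachableAvoiding

theorem refl (ha : a ∉ Y) : G.ReachableAvoiding Y a a :=
  ⟨.nil, by simpa using ha⟩

theorem symm (h : G.ReachableAvoiding Y a b) : G.ReachableAvoiding Y b a :=
  let ⟨p, hp⟩ := h
  ⟨p.reverse, fun v hv => hp v (by simpa using hv)⟩

theorem trans (hab : G.ReachableAvoiding Y a b) (hbc : G.ReachableAvoiding Y b c) :
    G.ReachableAvoiding Y a c :=
  let ⟨p, hp⟩ := hab
  let ⟨q, hq⟩ := hbc
  ⟨p.append q, fun v hv => (Walk.mem_support_append_iff p q).1 hv |>.elim (hp v) (hq v)⟩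

theorem mono (h : G.ReachableAvoiding Y a b) (hZY : Z ⊆ Y) : G.ReachableAvoiding Z a b :=
  let ⟨p, hp⟩ := h
  ⟨p, fun v hv hvZ => hp v hv (hZY hvZ)⟩

theorem map (f : G →g H) {Y : Set W} (h : G.ReachableAvoiding (f ⁻¹' Y) a b) :
    H.ReachableAvoiding Y (f a) (f b) :=
  let ⟨p, hp⟩ := h
  ⟨p.map f, fun _ hv => by
    obtain ⟨u, hu, rfl⟩ := List.mem_map.1 ((Walk.support_map f p) ▸ hv)
    exact hp u hu⟩

theorem exists_isPath (h : G.ReachableAvoiding Y a b) :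
    ∃ p : G.Walk a b, p.IsPath ∧ ∀ v ∈ p.support, v ∉ Y := by
  classical
  obtain ⟨p, hp⟩ := h
  exact ⟨p.bypass, p.bypass_isPath, fun v hv => hp v (p.support_bypass_subset_support hv)⟩

end ReachableAvoiding

theorem Adj.reachableAvoiding (h : G.Adj a b) (ha : a ∉ Y) (hb : b ∉ Y) :
    G.ReachableAvoiding Y a b :=
  ⟨.cons h .nil, by simp [ha, hb]⟩

theorem reachableAvoiding_empty_iff : G.ReachableAvoiding ∅ a b ↔ G.Reachable a b :=
  ⟨fun ⟨p, _⟩ => ⟨p⟩, fun ⟨p⟩ => ⟨p, fun _ _ => id⟩⟩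

end SimpleGraph

open SimpleGraph Finset Function

variable {n k : ℕ}

instance : DecidableRel (cubeGraph n).Adj := fun _ _ => by
  unfold cubeGraph; infer_instance

theorem cubeGraph_adj_update_iff {x : Fin n → Bool} {i : Fin n} {β : Bool} :
    (cubeGraph n).Adj x (update x i β) ↔ x i ≠ β := by
  refine ⟨fun ⟨j, hj, hrest⟩ => ?_,
    fun h => ⟨i, by simpa using h, fun j hj => by simp [hj]⟩⟩
  obtain rfl | hji := eq_or_ne j i
  · simpa using hj
  · simp [hji] at hj

theorem eq_update_of_cubeGraph_adj {x y : Fin n → Bool} {i : Fin n} (h : (cubeGraph n).Adj x y)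
    (hi : x i ≠ y i) : y = update x i (y i) := by
  obtain ⟨j, hj, hrest⟩ := h
  obtain rfl : i = j := by_contra fun hij => hi (hrest i hij)
  ext l
  obtain rfl | hl := eq_or_ne l i
  · simp
  · simp [hl, hrest l hl]

theorem reachableAvoiding_update {Y : Set (Fin n → Bool)} {x : Fin n → Bool} {i : Fin n}
    {β : Bool} (hx : x ∉ Y) (hβ : update x i β ∉ Y) :
    (cubeGraph n).ReachableAvoiding Y x (update x i β) := by
  by_cases hxi : x i = β
  · rw [← hxi, update_eq_self]
    exact .refl hx
  · exact (cubeGraph_adj_update_iff.2 hxi).reachableAvoiding hx hβ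

theorem cubeGraph_reachable_of_eqOn_compl (s : Finset (Fin n)) :
    ∀ x y : Fin n → Bool, (∀ i ∉ s, x i = y i) → (cubeGraph n).Reachable x y := by
  induction s using Finset.induction_on with
  | empty =>
    intro x y h
    obtain rfl : x = y := funext fun i => h i (notMem_empty i)
    rfl
  | insert i s _ ih =>
    intro x y h
    refine (reachableAvoiding_empty_iff.1 (reachableAvoiding_update (i := i) (β := y i)
      (Set.notMem_empty _) (Set.notMem_empty _))).trans (ih _ y fun j hj => ?_)
    obtain rfl | hji := eq_or_ne j i
    · simp
    · simpa [hji] using h j (by simp [hji, hj])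

theorem cubeGraph_connected : (cubeGraph n).Connected :=
  (connected_iff _).2
    ⟨fun x y => cubeGraph_reachable_of_eqOn_compl univ x y (by simp), inferInstance⟩

theorem neighborFinset_cubeGraph (x : Fin n → Bool) :
    (cubeGraph n).neighborFinset x = univ.image (fun i => update x i (!x i)) := by
  ext y
  simp only [mem_neighborFinset, mem_image, mem_univ, true_and]
  constructor
  · intro h
    obtain ⟨i, hi, -⟩ := id h
    refine ⟨i, ?_⟩
    rw [eq_update_of_cubeGraph_adj h hi]
    congr 1
    revert hi; cases x i <;> cases y i <;> simp
  · rintro ⟨i, rfl⟩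
    exact cubeGraph_adj_update_iff.2 (by simp)

theorem cubeGraph_degree (x : Fin n → Bool) : (cubeGraph n).degree x = n := by
  rw [← card_neighborFinset_eq_degree, neighborFinset_cubeGraph, card_image_of_injective,
    card_fin]
  intro i j hij
  by_contra hne
  simpa [update_of_ne hne] using congrFun hij i

def cubeParity (x : Fin n → Bool) : ZMod 2 := ∑ i, ((x i).toNat : ZMod 2)

theorem cubeParity_ne_of_adj {x y : Fin n → Bool} (h : (cubeGraph n).Adj x y) :
    cubeParity x ≠ cubeParity y := by
  obtain ⟨i, hi, hrest⟩ := h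
  intro heq
  rw [cubeParity, cubeParity, Fintype.sum_eq_add_sum_compl i,
    Fintype.sum_eq_add_sum_compl i (fun j => ((y j).toNat : ZMod 2)),
    sum_congr rfl fun j hj => by rw [hrest j (by simpa using hj)]] at heq
  have := add_right_cancel heq
  revert hi this; cases x i <;> cases y i <;> decide

theorem cubeGraph_cliqueFree_three : (cubeGraph n).CliqueFree 3 := by
  have : (cubeGraph n).Colorable 2 := (Coloring.mk cubeParity cubeParity_ne_of_adj).colorable
  exact this.cliqueFree (by norm_num)

theorem card_filter_eq_add_card_filter_eq_not {ι : Type*} (Y : Finset (ι → Bool)) (c : ι)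
    (β : Bool) :
    #(Y.filter (· c = β)) + #(Y.filter (· c = !β)) = #Y := by
  convert card_filter_add_card_filter_not (s := Y) (· c = β) using 3
  exact filter_congr fun x _ => by cases x c <;> cases β <;> decide

def cubeFaceHom (c : Fin (k + 1)) (β : Bool) : cubeGraph k →g cubeGraph (k + 1) where
  toFun v := Fin.insertNth c β v
  map_rel' {v w} h := by
    obtain ⟨i, hi, -⟩ := id h
    rw [eq_update_of_cubeGraph_adj h hi, Fin.insertNth_update]
    exact cubeGraph_adj_update_iff.2 (by simpa using hi)

@[simp]
theorem cubeFaceHom_apply_self (c : Fin (k + 1)) (β : Bool) (v : Fin k → Bool) :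
    cubeFaceHom c β v c = β :=
  Fin.insertNth_apply_same (α := fun _ => Bool) ..

theorem update_cubeFaceHom (c : Fin (k + 1)) (β β' : Bool) (v : Fin k → Bool) :
    update (cubeFaceHom c β v) c β' = cubeFaceHom c β' v :=
  Fin.update_insertNth ..

@[simp]
theorem removeNth_cubeFaceHom (c : Fin (k + 1)) (β : Bool) (v : Fin k → Bool) :
    Fin.removeNth c (cubeFaceHom c β v) = v :=
  Fin.removeNth_insertNth ..

theorem cubeFaceHom_removeNth {c : Fin (k + 1)} {β : Bool} {x : Fin (k + 1) → Bool}
    (hx : x c = β) : cubeFaceHom c β (Fin.removeNth c x) = x := by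
  subst hx
  exact Fin.insertNth_self_removeNth c x

theorem exists_forall_cubeFaceHom_notMem {Y : Finset (Fin (k + 1) → Bool)} (c : Fin (k + 1))
    (hY : #Y < 2 ^ k) : ∃ v : Fin k → Bool, ∀ β, cubeFaceHom c β v ∉ Y := by
  obtain ⟨v, -, hv⟩ := exists_mem_notMem_of_card_lt_card (s := Y.image (Fin.removeNth c))
    (t := univ) ((card_image_le.trans_lt hY).trans_le (by simp))
  exact ⟨v, fun β hβ => hv (mem_image.2 ⟨_, hβ, by simp⟩)⟩

theorem reachableAvoiding_of_mem_face
    (ih : ∀ Z : Finset (Fin k → Bool), #Z < k → ∀ u v, u ∉ Z → v ∉ Z →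
      (cubeGraph k).ReachableAvoiding Z u v) {Y : Finset (Fin (k + 1) → Bool)} {c : Fin (k + 1)}
    {β : Bool} (hY : #(Y.filter (· c = β)) < k) {a b : Fin (k + 1) → Bool} (ha : a ∉ Y)
    (hb : b ∉ Y) (hac : a c = β) (hbc : b c = β) :
    (cubeGraph (k + 1)).ReachableAvoiding Y a b := by
  set Z := (Y.filter (· c = β)).image (Fin.removeNth c)
  have hZ : cubeFaceHom c β ⁻¹' Y ⊆ Z := fun v hv =>
    mem_image.2 ⟨_, mem_filter.2 ⟨hv, by simp⟩, by simp⟩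
  have hnot {x} (hx : x ∉ Y) (hxc : x c = β) : Fin.removeNth c x ∉ Z := by
    simp only [Z, mem_image, mem_filter]
    rintro ⟨y, ⟨hy, hyc⟩, hyx⟩
    exact hx (by rwa [← cubeFaceHom_removeNth hxc, ← hyx, cubeFaceHom_removeNth hyc])
  rw [← cubeFaceHom_removeNth hac, ← cubeFaceHom_removeNth hbc]
  exact ((ih Z (card_image_le.trans_lt hY) _ _ (hnot ha hac) (hnot hb hbc)).mono hZ).map _

theorem reachableAvoiding_of_card_face_lt
    (ih : ∀ Z : Finset (Fin k → Bool), #Z < k → ∀ u v, u ∉ Z → v ∉ Z →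
      (cubeGraph k).ReachableAvoiding Z u v) {Y : Finset (Fin (k + 1) → Bool)} (c : Fin (k + 1))
    (hY : #Y < 2 ^ k) (hfaces : ∀ β, #(Y.filter (· c = β)) < k) {a b : Fin (k + 1) → Bool}
    (ha : a ∉ Y) (hb : b ∉ Y) : (cubeGraph (k + 1)).ReachableAvoiding Y a b := by
  obtain ⟨v, hv⟩ := exists_forall_cubeFaceHom_notMem c hY
  have hcross : (cubeGraph (k + 1)).ReachableAvoiding Y
      (cubeFaceHom c (a c) v) (cubeFaceHom c (b c) v) := by
    rw [← update_cubeFaceHom c (a c) (b c) v]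
    exact reachableAvoiding_update (hv _) (by simpa [update_cubeFaceHom] using hv (b c))
  exact ((reachableAvoiding_of_mem_face ih (hfaces _) ha (hv _) rfl (by simp)).trans hcross).trans
    (reachableAvoiding_of_mem_face ih (hfaces _) (hv _) hb (by simp) rfl)

theorem reachableAvoiding_of_card_lt : ∀ {m : ℕ} {Y : Finset (Fin m → Bool)}, #Y < m →
    ∀ {a b : Fin m → Bool}, a ∉ Y → b ∉ Y → (cubeGraph m).ReachableAvoiding Y a b
  | 0, _, hY, _, _, _, _ => absurd hY (Nat.not_lt_zero _)
  | k + 1, Y, hY, a, b, ha, hb => by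
    have ih (Z : Finset (Fin k → Bool)) (hZ : #Z < k) (u v) (hu : u ∉ Z) (hv : v ∉ Z) :=
      reachableAvoiding_of_card_lt hZ hu hv
    obtain rfl | ⟨y, hy⟩ := Y.eq_empty_or_nonempty
    · simpa using reachableAvoiding_empty_iff.2 (cubeGraph_connected.preconnected a b)
    by_cases hfaces : ∀ β, #(Y.filter (· 0 = β)) < k
    · exact reachableAvoiding_of_card_face_lt ih 0
        ((Nat.le_of_lt_succ hY).trans_lt k.lt_two_pow_self) hfaces ha hb
    push Not at hfaces
    obtain ⟨β, hβ⟩ := hfaces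
    have hempty : Y.filter (· 0 = !β) = ∅ := by
      have := card_filter_eq_add_card_filter_eq_not Y 0 β
      exact card_eq_zero.1 (by omega)
    have hflip (x : Fin (k + 1) → Bool) : update x 0 (!β) ∉ Y := fun hx =>
      (notMem_empty _) (hempty ▸ mem_filter.2 ⟨hx, update_self ..⟩ )
    have hk : 0 < k := (card_pos.2 ⟨y, hy⟩).trans_le (Nat.le_of_lt_succ hY)
    exact ((reachableAvoiding_update ha (hflip a)).trans (reachableAvoiding_of_mem_face ih
      (by simpa [hempty] using hk) (hflip a) (hflip b) (update_self ..) (update_self ..))).trans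
      (reachableAvoiding_update hb (hflip b)).symm

theorem exists_reachableAvoiding_face {Y : Finset (Fin n → Bool)} {c : Fin n} {β : Bool}
    (hY : #(Y.filter (· c = β)) ≤ 1) {x x' : Fin n → Bool} (hx : x ∉ Y)
    (hxx' : (cubeGraph n).Adj x x') (hx' : x' ∉ Y) :
    ∃ g ∉ Y, g c = β ∧ (cubeGraph n).ReachableAvoiding Y x g := by
  by_cases hf : update x c β ∈ Y
  swap
  · exact ⟨_, hf, update_self .., reachableAvoiding_update hx hf⟩
  -- The flip of `x` is blocked, so go through `x'` instead, which lies on the same side as `x`.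
  have hxc : x c ≠ β := fun h => hx (by rwa [← h, update_eq_self] at hf)
  have hx'c : x' c = x c := by
    by_contra h
    have : x' c = β := by revert h hxc; cases x c <;> cases x' c <;> cases β <;> decide
    exact hx' (by rwa [eq_update_of_cubeGraph_adj hxx' (Ne.symm h), this])
  have hg : update x' c β ∉ Y := fun hg => hxx'.ne <| by
    have := card_le_one.1 hY _ (mem_filter.2 ⟨hf, update_self ..⟩) _
      (mem_filter.2 ⟨hg, update_self ..⟩)
    calc x = update (update x c β) c (x c) := by simp
      _ = update (update x' c β) c (x' c) := by rw [this, hx'c]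
      _ = x' := by simp
  exact ⟨_, hg, update_self .., (hxx'.reachableAvoiding hx hx').trans
    (reachableAvoiding_update hx' hg)⟩

theorem reachableAvoiding_of_card_le (hn : 3 ≤ n) {Y : Finset (Fin n → Bool)} (hY : #Y ≤ n)
    {a a' b b' : Fin n → Bool} (ha : a ∉ Y) (haa' : (cubeGraph n).Adj a a') (ha' : a' ∉ Y)
    (hb : b ∉ Y) (hbb' : (cubeGraph n).Adj b b') (hb' : b' ∉ Y) :
    (cubeGraph n).ReachableAvoiding Y a b := by
  obtain hlt | hYn := hY.lt_or_eq
  · exact reachableAvoiding_of_card_lt hlt ha hb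
  obtain ⟨k, rfl⟩ : ∃ k, n = k + 2 := ⟨n - 2, by omega⟩
  have ih (Z : Finset (Fin (k + 1) → Bool)) (hZ : #Z < k + 1) (u v) (hu : u ∉ Z)
      (hv : v ∉ Z) :=
    reachableAvoiding_of_card_lt hZ hu hv
  by_cases hfaces : ∀ β, #(Y.filter (· 0 = β)) < k + 1
  · refine reachableAvoiding_of_card_face_lt ih 0 ?_ hfaces ha hb
    have := k.lt_two_pow_self
    rw [hYn, pow_succ]
    omega
  push Not at hfaces
  obtain ⟨β, hβ⟩ := hfaces
  have hsmall : #(Y.filter (· 0 = !β)) ≤ 1 := by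
    have := card_filter_eq_add_card_filter_eq_not Y 0 β
    omega
  obtain ⟨g, hg, hgc, hag⟩ := exists_reachableAvoiding_face hsmall ha haa' ha'
  obtain ⟨g', hg', hg'c, hbg'⟩ := exists_reachableAvoiding_face hsmall hb hbb' hb'
  exact (hag.trans (reachableAvoiding_of_mem_face ih (hsmall.trans_lt (by omega)) hg hg' hgc
    hg'c)).trans hbg'.symm

theorem neighborFinset_eq_of_not_reachableAvoiding (hn : 3 ≤ n) {Y : Finset (Fin n → Bool)}
    (hY : #Y = n) {a b : Fin n → Bool} (ha : a ∉ Y) (hb : b ∉ Y)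
    (h : ¬ (cubeGraph n).ReachableAvoiding Y a b) :
    (cubeGraph n).neighborFinset a = Y ∨ (cubeGraph n).neighborFinset b = Y := by
  have hescape {x} (hx : (cubeGraph n).neighborFinset x ≠ Y) :
      ∃ x', (cubeGraph n).Adj x x' ∧ x' ∉ Y := by
    by_contra! hsub
    refine hx (eq_of_subset_of_card_le (fun x' hx' => hsub x' (by simpa using hx')) ?_)
    rw [hY, card_neighborFinset_eq_degree, cubeGraph_degree]
  by_contra! hab
  obtain ⟨a', haa', ha'⟩ := hescape hab.1
  obtain ⟨b', hbb', hb'⟩ := hescape hab.2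
  exact h (reachableAvoiding_of_card_le hn hY.le ha haa' ha' hb hbb' hb')

theorem not_adj_of_neighborFinset_subset (hn : 3 ≤ n) {X : Finset (Fin n → Bool)}
    (hX : #X ≤ n + 2) {w w' : Fin n → Bool} (hw : (cubeGraph n).neighborFinset w ⊆ X)
    (hw' : (cubeGraph n).neighborFinset w' ⊆ X) : ¬ (cubeGraph n).Adj w w' := by
  intro hadj
  obtain ⟨u, hu⟩ :
      ((cubeGraph n).neighborFinset w ∩ (cubeGraph n).neighborFinset w').Nonempty := by
    rw [← card_pos]
    have := card_union_add_card_inter ((cubeGraph n).neighborFinset w)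
      ((cubeGraph n).neighborFinset w')
    have := card_le_card (union_subset hw hw')
    simp only [card_neighborFinset_eq_degree, cubeGraph_degree] at *
    omega
  simp only [mem_inter, mem_neighborFinset] at hu
  exact cubeGraph_cliqueFree_three {w, w', u} (is3Clique_triple_iff.2 ⟨hadj, hu.1, hu.2⟩)

theorem exists_neighborFinset_eq_sdiff (hn : 3 ≤ n) {X : Finset (Fin n → Bool)}
    (hX : #X = n + 2) {a b : Fin n → Bool} (ha : a ∈ X) (hb : b ∈ X) (hab : a ≠ b)
    (h : ¬ ∃ p : (cubeGraph n).Walk a b, p.IsPath ∧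
      ∀ v ∈ p.support, v ∈ X → v = a ∨ v = b) :
    ∃ w ∈ ({a, b} : Finset _), (cubeGraph n).neighborFinset w = X \ {a, b} := by
  have hY : #(X \ {a, b}) = n := by
    rw [card_sdiff_of_subset (insert_subset ha (singleton_subset_iff.2 hb)), card_pair hab, hX]
    rfl
  have hreach : ¬ (cubeGraph n).ReachableAvoiding ↑(X \ {a, b}) a b := fun hr => h <| by
    obtain ⟨p, hp, hsupp⟩ := hr.exists_isPath
    exact ⟨p, hp, fun v hv hvX => or_iff_not_imp_left.2 (by simpa [hvX] using hsupp v hv)⟩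
  simpa using neighborFinset_eq_of_not_reachableAvoiding hn hY (by simp) (by simp) hreach

/-- Let `X` be a set of exactly `n + 2` vertices of the `n`-cube (`n ≥ 3`),
`k := ⌊(n+2)/2⌋`, and let `s 0, t 0, …, s (k-1), t (k-1)` be `2k` distinct
vertices of `X`, arbitrarily labelled and paired. Then for at least `k - 1`
of the indices `i` there is a path in the `n`-cube from `s i` to `t i` none of
whose inner vertices lies in `X`. -/
theorem cube_short_distance (n : ℕ) (hn : 3 ≤ n)
    (X : Finset (Fin n → Bool)) (hX : X.card = n + 2)
    (s t : Fin ((n + 2) / 2) → (Fin n → Bool))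
    (hinj : Function.Injective (Sum.elim s t))
    (hs : ∀ i, s i ∈ X) (ht : ∀ i, t i ∈ X) :
    ∃ S : Finset (Fin ((n + 2) / 2)), (n + 2) / 2 - 1 ≤ S.card ∧
      ∀ i ∈ S, ∃ p : (cubeGraph n).Walk (s i) (t i), p.IsPath ∧
        ∀ v ∈ p.support, v ∈ X → v = s i ∨ v = t i := by
  classical
  set Good := fun i => ∃ p : (cubeGraph n).Walk (s i) (t i), p.IsPath ∧
    ∀ v ∈ p.support, v ∈ X → v = s i ∨ v = t i
  have hst (i j) : s i ≠ t j := hinj.ne Sum.inl_ne_inr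
  have hbad (i) (hi : ¬ Good i) := exists_neighborFinset_eq_sdiff hn hX (hs i) (ht i) (hst i i) hi
  have hbad_unique (i j) (hi : ¬ Good i) (hj : ¬ Good j) : i = j := by
    by_contra hij
    obtain ⟨w, -, hNw⟩ := hbad i hi
    obtain ⟨w', hw', hNw'⟩ := hbad j hj
    have hw'N : w' ∈ (cubeGraph n).neighborFinset w := by
      rw [hNw]
      simp only [mem_insert, mem_singleton] at hw'
      rcases hw' with rfl | rfl
      · have : s j ≠ s i := hinj.ne (Sum.inl_injective.ne (Ne.symm hij))
        simp [hs, hst, this]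
      · have : t j ≠ t i := hinj.ne (Sum.inr_injective.ne (Ne.symm hij))
        simp [ht, (hst _ _).symm, this]
    exact not_adj_of_neighborFinset_subset hn hX.le (hNw ▸ sdiff_subset) (hNw' ▸ sdiff_subset)
      (by simpa using hw'N)
  refine ⟨univ.filter Good, ?_, fun i hi => (mem_filter.1 hi).2⟩
  have hsplit := card_filter_add_card_filter_not (s := univ) Good
  have hfew : #(univ.filter (¬ Good ·)) ≤ 1 :=
    card_le_one.2 fun i hi j hj => hbad_unique i j (mem_filter.1 hi).2 (mem_filter.1 hj).2
  rw [card_univ, Fintype.card_fin] at hsplit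
  omega
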